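/- arXiv:1605.07088 — 5 statements merged into one kernel-verified Lean document; each statement's English description precedes it below -/
import Mathlib

section
/- For f ∈ ℓ^p(ℤ), 1 ≤ p < ∞, we have ‖T_t f − f‖_{ℓ^p} → 0 as t → 0⁺, where T_t f(n) = Σ_{j≥0} e^{-t} t^j/j! · f(n+j). -/
open Real Filter

open scoped ENNReal

set_option maxHeartbeats 1000000

/-- The semigroup `T_t f(n) = ∑_{j≥0} e^{-t} t^j/j! · f(n+j)`. -/
noncomputable def T (t : ℝ) (f : ℤ → ℝ) (n : ℤ) : ℝ :=
  ∑' j : ℕ, Real.exp (-t) * t ^ j / (j.factorial : ℝ) * f (n + (j : ℤ))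

/-- Evaluation at a point as a continuous linear map on `lp`. -/
noncomputable def evalCLM (q : ℝ≥0∞) [Fact (1 ≤ q)] (n : ℤ) :
    lp (fun _ : ℤ => ℝ) q →L[ℝ] ℝ :=
  LinearMap.mkContinuous
    { toFun := fun f => f n
      map_add' := fun f g => congrFun (lp.coeFn_add f g) n
      map_smul' := fun c f => congrFun (lp.coeFn_smul c f) n }
    1
    (fun f => by
      have hq0 : q ≠ 0 := by
        have : (1 : ℝ≥0∞) ≤ q := Fact.out
        intro h; rw [h] at this; simp at this
      simpa using lp.norm_apply_le_norm hq0 f n)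

lemma c_summable (t : ℝ) : Summable (fun j : ℕ => Real.exp (-t) * t ^ j / (j.factorial : ℝ)) := by
  have := (Real.summable_pow_div_factorial t).mul_left (Real.exp (-t))
  simpa [mul_div_assoc] using this

lemma c_tsum (t : ℝ) : ∑' j : ℕ, Real.exp (-t) * t ^ j / (j.factorial : ℝ) = 1 := by
  have h1 : ∑' j : ℕ, t ^ j / (j.factorial : ℝ) = Real.exp t := by
    rw [Real.exp_eq_exp_ℝ, NormedSpace.exp_eq_tsum_div]
  calc ∑' j : ℕ, Real.exp (-t) * t ^ j / (j.factorial : ℝ)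
      = Real.exp (-t) * ∑' j : ℕ, t ^ j / (j.factorial : ℝ) := by
        rw [← tsum_mul_left]; simp [mul_div_assoc]
    _ = 1 := by rw [h1, ← Real.exp_add]; simp

/-- For `f ∈ ℓ^p(ℤ)`, `1 ≤ p < ∞`, we have `‖T_t f − f‖_{ℓ^p} → 0` as `t → 0⁺`. -/
theorem T_strong_continuity (p : ℝ) (hp : 1 ≤ p) (f : ℤ → ℝ)
    (hf : Summable fun n : ℤ => |f n| ^ p) :
    Tendsto (fun t : ℝ => (∑' n : ℤ, |T t f n - f n| ^ p) ^ (1 / p))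
      (nhdsWithin 0 (Set.Ioi 0)) (nhds 0) := by
  have hp0 : (0 : ℝ) < p := lt_of_lt_of_le one_pos hp
  set q : ℝ≥0∞ := ENNReal.ofReal p with hqdef
  haveI : Fact (1 ≤ q) := ⟨ENNReal.one_le_ofReal.mpr hp⟩
  have hq0 : q ≠ 0 := by
    have : (1 : ℝ≥0∞) ≤ q := Fact.out
    intro h; rw [h] at this; simp at this
  have hqR : q.toReal = p := ENNReal.toReal_ofReal hp0.le
  have hqR0 : 0 < q.toReal := by rw [hqR]; exact hp0
  have hf' : Summable fun n : ℤ => ‖f n‖ ^ q.toReal := by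
    simpa [hqR, Real.norm_eq_abs] using hf
  -- shifts
  have hshift : ∀ j : ℤ, Memℓp (fun n : ℤ => f (n + j)) q := by
    intro j
    apply memℓp_gen
    exact (Equiv.addRight j).summable_iff.mpr hf'
  set F : lp (fun _ : ℤ => ℝ) q := ⟨f, memℓp_gen hf'⟩ with hF
  set Sh : ℕ → lp (fun _ : ℤ => ℝ) q := fun j => ⟨fun n => f (n + (j : ℤ)), hshift j⟩ with hSh
  have norm_Sh : ∀ j : ℕ, ‖Sh j‖ = ‖F‖ := by
    intro j
    rw [lp.norm_eq_tsum_rpow hqR0, lp.norm_eq_tsum_rpow hqR0]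
    congr 1
    exact (Equiv.addRight (j : ℤ)).tsum_eq (fun n => ‖f n‖ ^ q.toReal)
  have Sh0 : Sh 0 = F := by
    apply lp.ext; funext n; simp [hSh, hF]
  set c : ℝ → ℕ → ℝ := fun t j => Real.exp (-t) * t ^ j / (j.factorial : ℝ) with hc
  have hc_nonneg : ∀ t : ℝ, 0 ≤ t → ∀ j, 0 ≤ c t j := fun t ht j => by
    have := (Real.exp_pos (-t)).le
    positivity
  set g : ℝ → ℕ → lp (fun _ : ℤ => ℝ) q := fun t j => c t j • (Sh j - F) with hg
  have norm_g_le : ∀ t : ℝ, 0 ≤ t → ∀ j, ‖g t j‖ ≤ c t j * (2 * ‖F‖) := by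
    intro t ht j
    rw [hg, norm_smul, Real.norm_eq_abs, abs_of_nonneg (hc_nonneg t ht j)]
    have : ‖Sh j - F‖ ≤ 2 * ‖F‖ := by
      calc ‖Sh j - F‖ ≤ ‖Sh j‖ + ‖F‖ := norm_sub_le _ _
        _ = 2 * ‖F‖ := by rw [norm_Sh]; ring
    exact mul_le_mul_of_nonneg_left this (hc_nonneg t ht j)
  have summable_bound : ∀ t : ℝ, Summable (fun j => c t j * (2 * ‖F‖)) :=
    fun t => (c_summable t).mul_right _
  have summable_norm_g : ∀ t : ℝ, 0 ≤ t → Summable (fun j => ‖g t j‖) := by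
    intro t ht
    exact Summable.of_nonneg_of_le (fun j => norm_nonneg _) (norm_g_le t ht) (summable_bound t)
  have summable_g : ∀ t : ℝ, 0 ≤ t → Summable (g t) :=
    fun t ht => (summable_norm_g t ht).of_norm
  -- pointwise identity
  have key : ∀ t : ℝ, 0 ≤ t → ∀ n : ℤ, T t f n - f n = (∑' j, g t j) n := by
    intro t ht n
    have h1 : (∑' j, g t j) n = ∑' j, (g t j) n := by
      have := (summable_g t ht).hasSum.mapL (evalCLM q n)
      exact this.tsum_eq.symm
    have h2 : ∀ j, (g t j) n = c t j * (f (n + (j : ℤ)) - f n) := by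
      intro j
      rw [hg]
      simp only [lp.coeFn_smul, Pi.smul_apply, lp.coeFn_sub, Pi.sub_apply]
      rfl
    have hfb : ∀ m : ℤ, |f m| ≤ ‖F‖ := by
      intro m
      simpa [hF, Real.norm_eq_abs] using lp.norm_apply_le_norm hq0 F m
    have hs1 : Summable (fun j => c t j * f (n + (j : ℤ))) := by
      apply Summable.of_norm
      apply Summable.of_nonneg_of_le (fun j => norm_nonneg _) _ ((c_summable t).mul_right ‖F‖)
      intro j
      rw [Real.norm_eq_abs, abs_mul, abs_of_nonneg (hc_nonneg t ht j)]
      exact mul_le_mul_of_nonneg_left (hfb _) (hc_nonneg t ht j)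
    have hs2 : Summable (fun j => c t j * f n) := (c_summable t).mul_right _
    rw [h1]
    calc T t f n - f n
        = (∑' j, c t j * f (n + (j : ℤ))) - (∑' j, c t j) * f n := by
          rw [c_tsum t, one_mul]; rfl
      _ = (∑' j, c t j * f (n + (j : ℤ))) - ∑' j, c t j * f n := by rw [tsum_mul_right]
      _ = ∑' j, (c t j * f (n + (j : ℤ)) - c t j * f n) := (Summable.tsum_sub hs1 hs2).symm
      _ = ∑' j, (g t j) n := by
          congr 1; funext j; rw [h2 j]; ring
  -- main bound
  have main_bound : ∀ t : ℝ, 0 < t →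
      (∑' n : ℤ, |T t f n - f n| ^ p) ^ (1 / p) ≤ 2 * ‖F‖ * (1 - Real.exp (-t)) := by
    intro t ht
    have hnorm_eq : (∑' n : ℤ, |T t f n - f n| ^ p) ^ (1 / p) = ‖∑' j, g t j‖ := by
      rw [lp.norm_eq_tsum_rpow hqR0, hqR]
      congr 1
      · apply tsum_congr
        intro n
        rw [key t ht.le n, Real.norm_eq_abs]
    rw [hnorm_eq]
    calc ‖∑' j, g t j‖ ≤ ∑' j, ‖g t j‖ := norm_tsum_le_tsum_norm (summable_norm_g t ht.le)
      _ ≤ 2 * ‖F‖ * (1 - Real.exp (-t)) := by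
          have e1 : ∑' j, ‖g t j‖ = ‖g t 0‖ + ∑' j, ‖g t (j + 1)‖ :=
            Summable.tsum_eq_zero_add (summable_norm_g t ht.le)
          have e2 : (∑' j, c t j * (2 * ‖F‖)) = c t 0 * (2 * ‖F‖) + ∑' j, c t (j+1) * (2 * ‖F‖) :=
            Summable.tsum_eq_zero_add (summable_bound t)
          have hg0 : ‖g t 0‖ = 0 := by
            rw [hg]; simp [Sh0]
          have htail : ∑' j, ‖g t (j + 1)‖ ≤ ∑' j, c t (j+1) * (2 * ‖F‖) := by
            apply Summable.tsum_le_tsum (fun j => norm_g_le t ht.le (j+1))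
              ((summable_norm_g t ht.le).comp_injective (add_left_injective 1))
              ((summable_bound t).comp_injective (add_left_injective 1))
          have hc0 : c t 0 = Real.exp (-t) := by simp [hc]
          have e3 : ∑' j, c t j * (2 * ‖F‖) = 2 * ‖F‖ := by
            rw [tsum_mul_right, c_tsum, one_mul]
          calc ∑' j, ‖g t j‖ = ∑' j, ‖g t (j + 1)‖ := by rw [e1, hg0, zero_add]
            _ ≤ ∑' j, c t (j+1) * (2 * ‖F‖) := htail
            _ = (∑' j, c t j * (2 * ‖F‖)) - c t 0 * (2 * ‖F‖) := by rw [e2]; ring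
            _ = 2 * ‖F‖ - Real.exp (-t) * (2 * ‖F‖) := by rw [e3, hc0]
            _ = 2 * ‖F‖ * (1 - Real.exp (-t)) := by ring
  -- squeeze
  have hle : ∀ᶠ t in nhdsWithin (0:ℝ) (Set.Ioi 0),
      (∑' n : ℤ, |T t f n - f n| ^ p) ^ (1 / p) ≤ 2 * ‖F‖ * (1 - Real.exp (-t)) := by
    filter_upwards [self_mem_nhdsWithin] with t ht
    exact main_bound t ht
  have hge : ∀ᶠ t in nhdsWithin (0:ℝ) (Set.Ioi 0),
      0 ≤ (∑' n : ℤ, |T t f n - f n| ^ p) ^ (1 / p) := by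
    filter_upwards with t
    apply Real.rpow_nonneg
    apply tsum_nonneg
    intro n
    positivity
  have hlim : Tendsto (fun t : ℝ => 2 * ‖F‖ * (1 - Real.exp (-t)))
      (nhdsWithin 0 (Set.Ioi 0)) (nhds 0) := by
    have : Tendsto (fun t : ℝ => 2 * ‖F‖ * (1 - Real.exp (-t))) (nhds 0) (nhds 0) := by
      have hcont : Continuous (fun t : ℝ => 2 * ‖F‖ * (1 - Real.exp (-t))) := continuous_const.mul (continuous_const.sub (Real.continuous_exp.comp continuous_neg))
      have := hcont.tendsto 0
      simpa using this
    exact this.mono_left nhdsWithin_le_nhds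
  exact squeeze_zero' hge hle hlim
end

section
/- Maximum principle: let 0 < α < 1, h > 0, and u : ℤ → ℝ bounded with u(j₀) = 0 and u(j) ≥ 0 for all j ≥ j₀. Then (δ_right)^α u(j₀) := (1/h^α) Σ_{m=0}^∞ Λ^α(m) u(j₀+m) ≤ 0. Moreover equality holds if and only if u(j) = 0 for all j ≥ j₀. -/
/-!
For `0 < α < 1` the weights `Λ^α(m)`, `m ≥ 1`, are negative, and by Pascal's rule their partial
sums are `∑_{m ≤ N} Λ^α(m) = Λ^{α-1}(N) > 0`; so `∑_{m ≥ 1} |Λ^α(m)| ≤ 1` and the series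
defining `(δ_right)^α u(j₀)` converges absolutely for bounded `u`. Its `m = 0` term vanishes and
every other term is a negative weight times `u(j₀ + m) ≥ 0`, so the sum is `≤ 0`, and it is `0`
exactly when every term is, i.e. when `u` vanishes on `[j₀, ∞)`.
-/

open Real

/-- The generalized binomial coefficient `(α choose m) = α(α−1)⋯(α−m+1)/m!`. -/
noncomputable def rchoose (α : ℝ) (m : ℕ) : ℝ :=
  (∏ i ∈ Finset.range m, (α - i)) / (m.factorial : ℝ)

/-- The kernel `Λ^α(m) = (−1)^m (α choose m)`. -/
noncomputable def Lam (α : ℝ) (m : ℕ) : ℝ := (-1) ^ m * rchoose α m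

/-- The fractional discrete derivative on the mesh `ℤ_h`:
`(δ_right)^α u(n) = h^{-α} ∑_{m=0}^∞ Λ^α(m) u(n+m)`. -/
noncomputable def deltaRightPow (α h : ℝ) (u : ℤ → ℝ) (n : ℤ) : ℝ :=
  h ^ (-α) * ∑' m : ℕ, Lam α m * u (n + (m : ℤ))

open Finset

theorem Summable.tsum_eq_zero_iff_of_nonpos {ι : Type*} {f : ι → ℝ} (hf : Summable f)
    (h : ∀ i, f i ≤ 0) : ∑' i, f i = 0 ↔ f = 0 := by
  rw [← neg_eq_zero, ← tsum_neg, ← hf.neg.hasSum_iff,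
    hasSum_zero_iff_of_nonneg fun i ↦ neg_nonneg.2 (h i)]
  exact neg_eq_zero

theorem rchoose_zero (α : ℝ) : rchoose α 0 = 1 := by simp [rchoose]

theorem rchoose_succ (α : ℝ) (n : ℕ) :
    rchoose α (n + 1) = α / (n + 1) * rchoose (α - 1) n := by
  simp only [rchoose, prod_range_succ', Nat.factorial_succ]
  push_cast
  field_simp
  ring_nf

theorem Lam_zero (α : ℝ) : Lam α 0 = 1 := by simp [Lam, rchoose_zero]

theorem Lam_succ (α : ℝ) (n : ℕ) : Lam α (n + 1) = -(α / (n + 1)) * Lam (α - 1) n := by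
  rw [Lam, Lam, rchoose_succ, pow_succ]
  ring

theorem Lam_eq_prod_div (β : ℝ) (n : ℕ) : Lam β n = (∏ i ∈ range n, (i - β)) / n.factorial := by
  have hsign : (-1 : ℝ) ^ n = ∏ _i ∈ range n, (-1 : ℝ) := by simp
  rw [Lam, rchoose, mul_div_assoc', hsign, ← prod_mul_distrib]
  simp only [neg_one_mul, neg_sub]

theorem Lam_succ_eq_mul (β : ℝ) (n : ℕ) : Lam β (n + 1) = Lam β n * ((n - β) / (n + 1)) := by
  rw [Lam_eq_prod_div, Lam_eq_prod_div, prod_range_succ, Nat.factorial_succ]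
  push_cast
  field_simp

theorem Lam_pos {β : ℝ} (hβ : β < 0) (n : ℕ) : 0 < Lam β n := by
  rw [Lam_eq_prod_div]
  exact div_pos (prod_pos fun i _ ↦ by linarith [(Nat.cast_nonneg i : (0 : ℝ) ≤ i)])
    (Nat.cast_pos.2 n.factorial_pos)

theorem Lam_succ_neg {α : ℝ} (hα : 0 < α) (hα1 : α < 1) (n : ℕ) : Lam α (n + 1) < 0 := by
  rw [Lam_succ, neg_mul, neg_lt_zero]
  exact mul_pos (by positivity) (Lam_pos (by linarith) n)

theorem Lam_ne_zero {α : ℝ} (hα : 0 < α) (hα1 : α < 1) : ∀ n, Lam α n ≠ 0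
  | 0 => by simp [Lam_zero]
  | n + 1 => (Lam_succ_neg hα hα1 n).ne

theorem sum_range_succ_Lam (α : ℝ) (N : ℕ) :
    ∑ m ∈ range (N + 1), Lam α m = Lam (α - 1) N := by
  induction N with
  | zero => simp [Lam_zero]
  | succ N ih =>
    rw [sum_range_succ, ih, Lam_succ, Lam_succ_eq_mul]
    field_simp
    ring

theorem summable_Lam {α : ℝ} (hα : 0 < α) (hα1 : α < 1) : Summable (Lam α) := by
  have htail : Summable fun m ↦ -Lam α (m + 1) := by
    refine summable_of_sum_range_le (c := 1) (fun m ↦ (neg_pos.2 (Lam_succ_neg hα hα1 m)).le)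
      fun N ↦ ?_
    have h := sum_range_succ_Lam α N
    rw [sum_range_succ', Lam_zero] at h
    linarith [sum_neg_distrib (s := range N) (f := fun m ↦ Lam α (m + 1)),
      Lam_pos (by linarith : α - 1 < 0) N]
  exact (summable_nat_add_iff 1).1 (by simpa using htail.neg)

/-- Maximum principle for the fractional discrete derivative. -/
theorem maximum_principle (α h : ℝ) (hα : 0 < α) (hα1 : α < 1) (hh : 0 < h)
    (u : ℤ → ℝ) (M : ℝ) (hu : ∀ n, |u n| ≤ M) (j₀ : ℤ)
    (hzero : u j₀ = 0) (hnonneg : ∀ j, j₀ ≤ j → 0 ≤ u j) :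
    deltaRightPow α h u j₀ ≤ 0 ∧
      (deltaRightPow α h u j₀ = 0 ↔ ∀ j, j₀ ≤ j → u j = 0) := by
  set f : ℕ → ℝ := fun m ↦ Lam α m * u (j₀ + m) with hf
  have hsum : Summable f := ((summable_Lam hα hα1).abs.mul_right M).of_norm_bounded fun m ↦ by
    rw [Real.norm_eq_abs, abs_mul]
    exact mul_le_mul_of_nonneg_left (hu _) (abs_nonneg _)
  have hf_nonpos : ∀ m, f m ≤ 0
    | 0 => by simp [hf, hzero]
    | m + 1 => mul_nonpos_of_nonpos_of_nonneg (Lam_succ_neg hα hα1 m).le (hnonneg _ (by omega))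
  have hpos : 0 < h ^ (-α) := rpow_pos_of_pos hh _
  refine ⟨mul_nonpos_of_nonneg_of_nonpos hpos.le (tsum_nonpos hf_nonpos), ?_⟩
  rw [deltaRightPow, ← hf, mul_eq_zero, or_iff_right hpos.ne',
    hsum.tsum_eq_zero_iff_of_nonpos hf_nonpos, funext_iff]
  simp only [hf, Pi.zero_apply, mul_eq_zero, Lam_ne_zero hα hα1, false_or]
  constructor
  · intro H j hj
    obtain ⟨m, rfl⟩ := Int.le.dest hj
    exact H m
  · exact fun H m ↦ H _ (by omega)
end

section
/- Kernel approximation estimate: for 0 < α < 1, h > 0, j ∈ ℤ, and m ≥ 1, one has |(1/Γ(−α)) ∫_{(j+m)h}^{(j+m+1)h} (t − jh)^{−1−α} dt − Λ^α(m)/h^α| ≤ C_α / (h^α m^{2+α}) for a constant C_α depending only on α. -/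
open Real intervalIntegral

/-!
Substituting `t = j h + h u` turns the integral into `h^(-α) ∫_m^{m+1} u^(-1-α) du`, which is
within `(1 + α) m^(-2-α)` of `m^(-1-α)` by Bernoulli's inequality. On the kernel side,
`Γ(-α) Λ^α(m) = Γ(m - α) / Γ(m + 1)`, and Gautschi's inequality (two applications of the
log-convexity of `Γ`) traps this ratio between `m^(-1-α)` and `m^(-α) / (m - α)`, an interval of
length at most `α / (1 - α) · m^(-2-α)`.
-/

open Finset

namespace Real

theorem Gamma_add_le_Gamma_mul_rpow {x s : ℝ} (hx : 0 < x) (hs0 : 0 ≤ s) (hs1 : s ≤ 1) :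
    Gamma (x + s) ≤ Gamma x * x ^ s := by
  rcases hs0.eq_or_lt with rfl | hs0
  · simp
  rcases hs1.eq_or_lt with rfl | hs1
  · rw [Gamma_add_one hx.ne', rpow_one, mul_comm]
  have hΓ : 0 < Gamma x := Gamma_pos_of_pos hx
  calc Gamma (x + s) = Gamma ((1 - s) * x + s * (x + 1)) := by ring_nf
    _ ≤ Gamma x ^ (1 - s) * Gamma (x + 1) ^ s :=
      Gamma_mul_add_mul_le_rpow_Gamma_mul_rpow_Gamma hx (by linarith) (by linarith) hs0
        (by ring)
    _ = Gamma x * x ^ s := by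
      rw [Gamma_add_one hx.ne', mul_rpow hx.le hΓ.le, mul_left_comm, ← rpow_add hΓ,
        sub_add_cancel, rpow_one, mul_comm]

theorem Gamma_add_nat_eq_mul_prod {s : ℝ} (n : ℕ) (hs : ∀ i < n, s + i ≠ 0) :
    Gamma (s + n) = Gamma s * ∏ i ∈ range n, (s + i) := by
  induction n with
  | zero => simp
  | succ n ih =>
    rw [Nat.cast_succ, ← add_assoc, Gamma_add_one (hs n n.lt_succ_self),
      ih fun i hi => hs i (hi.trans n.lt_succ_self), prod_range_succ]
    ring

theorem Gamma_neg_lt_zero {α : ℝ} (hα : 0 < α) (hα1 : α < 1) : Gamma (-α) < 0 := by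
  have h := Gamma_add_one (neg_ne_zero.mpr hα.ne')
  have hpos : 0 < Gamma (-α + 1) := Gamma_pos_of_pos (by linarith)
  nlinarith

theorem Gamma_add_one_mul_rpow_le_Gamma_sub {x s : ℝ} (hs0 : 0 ≤ s) (hs1 : s ≤ 1)
    (hsx : s < x) :
    Gamma (x + 1) * x ^ (-(1 + s)) ≤ Gamma (x - s) := by
  have hx : 0 < x := hs0.trans_lt hsx
  have hxs : 0 < x - s := sub_pos.mpr hsx
  calc Gamma (x + 1) * x ^ (-(1 + s)) = Gamma x * (x ^ s)⁻¹ := by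
        rw [Gamma_add_one hx.ne', neg_add, rpow_add hx, rpow_neg_one, rpow_neg hx.le]
        field_simp
    _ ≤ Gamma (x - s) * (x - s) ^ s * (x ^ s)⁻¹ := by
      gcongr
      simpa using Gamma_add_le_Gamma_mul_rpow hxs hs0 hs1
    _ ≤ Gamma (x - s) := by
      have hΓ : 0 < Gamma (x - s) := Gamma_pos_of_pos hxs
      have hxs_le : (x - s) ^ s ≤ x ^ s := rpow_le_rpow hxs.le (by linarith) hs0
      rw [mul_assoc]
      exact mul_le_of_le_one_right hΓ.le
        (mul_inv_le_one_of_le₀ hxs_le (rpow_nonneg hx.le s))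

theorem sub_mul_Gamma_sub_le {x s : ℝ} (hs0 : 0 ≤ s) (hs1 : s ≤ 1) (hsx : s < x) :
    (x - s) * Gamma (x - s) ≤ Gamma (x + 1) * x ^ (-s) := by
  have hx : 0 < x := hs0.trans_lt hsx
  calc (x - s) * Gamma (x - s) = Gamma (x + (1 - s)) := by
        rw [← Gamma_add_one (sub_pos.mpr hsx).ne']; ring_nf
    _ ≤ Gamma x * x ^ (1 - s) := Gamma_add_le_Gamma_mul_rpow hx (by linarith) (by linarith)
    _ = Gamma (x + 1) * x ^ (-s) := by
      rw [Gamma_add_one hx.ne', rpow_sub hx, rpow_one, rpow_neg hx.le]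
      field_simp

theorem abs_Gamma_sub_div_Gamma_add_one_sub_rpow_le {x s : ℝ} (hs0 : 0 ≤ s) (hs1 : s < 1)
    (hx : 1 ≤ x) :
    |Gamma (x - s) / Gamma (x + 1) - x ^ (-(1 + s))| ≤ s / (1 - s) * x ^ (-(2 + s)) := by
  have hx0 : 0 < x := by linarith
  have hsx : s < x := by linarith
  have hΓ : 0 < Gamma (x + 1) := Gamma_pos_of_pos (by linarith)
  have hlower : x ^ (-(1 + s)) ≤ Gamma (x - s) / Gamma (x + 1) := by
    rw [le_div_iff₀ hΓ, mul_comm]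
    exact Gamma_add_one_mul_rpow_le_Gamma_sub hs0 hs1.le hsx
  have hupper : Gamma (x - s) / Gamma (x + 1) ≤ x ^ (-s) / (x - s) := by
    rw [div_le_div_iff₀ hΓ (sub_pos.mpr hsx), mul_comm, mul_comm (x ^ (-s))]
    exact sub_mul_Gamma_sub_le hs0 hs1.le hsx
  have hgap : x ^ (-s) / (x - s) - x ^ (-(1 + s)) ≤ s / (1 - s) * x ^ (-(2 + s)) := by
    have ha : 0 < x ^ (-s) := rpow_pos_of_pos hx0 _
    rw [show -(1 + s) = -s + -1 by ring, show -(2 + s) = -s + -2 by ring,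
      rpow_add hx0, rpow_add hx0, rpow_neg_one, rpow_neg hx0.le 2, rpow_two]
    have hxs : 0 < x - s := sub_pos.mpr hsx
    have hshrink : (1 - s) * x ≤ x - s := by nlinarith
    rw [show x ^ (-s) / (x - s) - x ^ (-s) * x⁻¹ = x ^ (-s) * s / (x * (x - s)) by
        field_simp; ring, div_le_iff₀ (by positivity)]
    field_simp
    rw [le_div_iff₀ (by linarith)]
    nlinarith
  rw [abs_of_nonneg (sub_nonneg.mpr hlower)]
  linarith

end Real

theorem Gamma_neg_mul_Lam {α : ℝ} {m : ℕ} (hα : ∀ i < m, (i : ℝ) ≠ α) :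
    Gamma (-α) * Lam α m = Gamma (m - α) / Gamma (m + 1) := by
  have hprod : (-1) ^ m * ∏ i ∈ range m, (α - i) = ∏ i ∈ range m, (-α + i) := by
    have h := prod_neg (s := range m) fun i : ℕ => α - i
    rw [card_range] at h
    rw [← h]
    exact prod_congr rfl fun i _ => by ring
  rw [Lam, rchoose, Gamma_nat_eq_factorial, ← mul_div_assoc, hprod, sub_eq_neg_add,
    Gamma_add_nat_eq_mul_prod m fun i hi h => hα i hi (by linarith)]
  ring

theorem abs_Lam_sub_rpow_le {α : ℝ} (hα : 0 < α) (hα1 : α < 1) {m : ℕ} (hm : 1 ≤ m) :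
    |Lam α m - (m : ℝ) ^ (-(1 + α)) / Gamma (-α)| ≤
      α / (1 - α) / |Gamma (-α)| * (m : ℝ) ^ (-(2 + α)) := by
  have hΓ : Gamma (-α) ≠ 0 := (Gamma_neg_lt_zero hα hα1).ne
  have hnat : ∀ i < m, (i : ℝ) ≠ α := by
    intro i _ hi
    have hi01 : (0 : ℝ) < i ∧ (i : ℝ) < 1 := ⟨hi ▸ hα, hi ▸ hα1⟩
    norm_cast at hi01
    omega
  have hLam : Lam α m = (Gamma (m - α) / Gamma (m + 1)) / Gamma (-α) := by
    rw [← Gamma_neg_mul_Lam hnat]; field_simp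
  rw [hLam, ← sub_div, abs_div, div_mul_eq_mul_div, div_le_div_iff_of_pos_right (abs_pos.mpr hΓ)]
  exact abs_Gamma_sub_div_Gamma_add_one_sub_rpow_le hα.le hα1 (by exact_mod_cast hm)

theorem integral_rpow_sub_mul_eq (p : ℝ) {h : ℝ} (hh : 0 < h) (a : ℝ) {x : ℝ}
    (hx : 0 ≤ x) :
    ∫ t in (a + x) * h..(a + x + 1) * h, (t - a * h) ^ p =
      h ^ (p + 1) * ∫ u in x..x + 1, u ^ p := by
  have hscale : ∫ t in x * h..(x + 1) * h, t ^ p = h * ∫ u in x..x + 1, (u * h) ^ p := by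
    rw [integral_comp_mul_right (fun t : ℝ => t ^ p) hh.ne', smul_eq_mul,
      mul_inv_cancel_left₀ hh.ne']
  have hsplit : ∫ u in x..x + 1, (u * h) ^ p = (∫ u in x..x + 1, u ^ p) * h ^ p := by
    rw [← integral_mul_const]
    refine integral_congr fun u hu => ?_
    rw [Set.uIcc_of_le (by linarith)] at hu
    exact mul_rpow (hx.trans hu.1) hh.le
  rw [integral_comp_sub_right (fun t : ℝ => t ^ p), show (a + x) * h - a * h = x * h by ring,
    show (a + x + 1) * h - a * h = (x + 1) * h by ring, hscale, hsplit, rpow_add_one hh.ne']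
  ring

theorem rpow_neg_sub_rpow_neg_le {p x t : ℝ} (hp : 1 ≤ p) (hx : 0 < x) (hxt : x ≤ t) :
    x ^ (-p) - t ^ (-p) ≤ p * x ^ (-(p + 1)) * (t - x) := by
  have ht : 0 < t := hx.trans_le hxt
  have ha : 0 < x ^ (-p) := rpow_pos_of_pos hx _
  have hbernoulli : 1 + p * ((x - t) / t) ≤ (x / t) ^ p := by
    have h := one_add_mul_self_le_rpow_one_add (s := (x - t) / t)
      (by rw [le_div_iff₀ ht]; linarith) hp
    rwa [show 1 + (x - t) / t = x / t by field_simp; ring] at h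
  have hscaled : x ^ (-p) * (x / t) ^ p = t ^ (-p) := by
    rw [div_rpow hx.le ht.le, rpow_neg hx.le, rpow_neg ht.le]
    field_simp
  have hdrop : (t - x) / t ≤ (t - x) / x := div_le_div_of_nonneg_left (by linarith) hx hxt
  calc x ^ (-p) - t ^ (-p) ≤ x ^ (-p) * (p * ((t - x) / t)) := by
        have h := mul_le_mul_of_nonneg_left hbernoulli ha.le
        rw [hscaled, show (x - t) / t = -((t - x) / t) by ring] at h
        linarith
    _ ≤ x ^ (-p) * (p * ((t - x) / x)) := by gcongr
    _ = p * x ^ (-(p + 1)) * (t - x) := by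
      rw [neg_add, rpow_add hx, rpow_neg_one]; ring

theorem abs_integral_rpow_neg_sub_le {p x : ℝ} (hp : 1 ≤ p) (hx : 0 < x) :
    |(∫ u in x..x + 1, u ^ (-p)) - x ^ (-p)| ≤ p * x ^ (-(p + 1)) := by
  have hint : IntervalIntegrable (fun u : ℝ => u ^ (-p)) MeasureTheory.volume x (x + 1) :=
    intervalIntegral.intervalIntegrable_rpow (Or.inr (by
      rw [Set.uIcc_of_le (by linarith)]; exact fun h => hx.not_ge h.1))
  have hconst : x ^ (-p) = ∫ _ in x..x + 1, x ^ (-p) := by simp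
  rw [hconst, ← integral_sub hint intervalIntegrable_const]
  have hbound : ∀ u ∈ Set.uIoc x (x + 1), ‖u ^ (-p) - x ^ (-p)‖ ≤ p * x ^ (-(p + 1)) := by
    intro u hu
    rw [Set.uIoc_of_le (by linarith)] at hu
    have hmono : u ^ (-p) ≤ x ^ (-p) := rpow_le_rpow_of_nonpos hx hu.1.le (by linarith)
    rw [Real.norm_eq_abs, abs_sub_comm, abs_of_nonneg (sub_nonneg.mpr hmono)]
    calc x ^ (-p) - u ^ (-p) ≤ p * x ^ (-(p + 1)) * (u - x) :=
          rpow_neg_sub_rpow_neg_le hp hx hu.1.le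
      _ ≤ p * x ^ (-(p + 1)) := by
        have : 0 ≤ p * x ^ (-(p + 1)) := by positivity
        nlinarith [hu.2]
  simpa using norm_integral_le_of_norm_le_const hbound

/-- Kernel approximation estimate: the integral of the Marchaud kernel over a mesh cell
is approximated by `Λ^α(m)/h^α` with error `C_α/(h^α m^{2+α})`. -/
theorem kernel_approximation (α : ℝ) (hα : 0 < α) (hα1 : α < 1) :
    ∃ C : ℝ, 0 < C ∧ ∀ h : ℝ, 0 < h → ∀ j : ℤ, ∀ m : ℕ, 1 ≤ m →
      |(1 / Real.Gamma (-α)) *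
          (∫ t in ((j : ℝ) + m) * h..((j : ℝ) + m + 1) * h, (t - j * h) ^ (-(1 + α))) -
        Lam α m / h ^ α| ≤ C / (h ^ α * (m : ℝ) ^ (2 + α)) := by
  have hΓ : 0 < |Gamma (-α)| := abs_pos.mpr (Gamma_neg_lt_zero hα hα1).ne
  have h1α : 0 < 1 - α := by linarith
  refine ⟨(1 + α + α / (1 - α)) / |Gamma (-α)|, by positivity, fun h hh j m hm => ?_⟩
  have hm0 : (0 : ℝ) < m := by exact_mod_cast hm
  set I := ∫ u in (m : ℝ)..m + 1, u ^ (-(1 + α))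
  have hI : |I - (m : ℝ) ^ (-(1 + α))| ≤ (1 + α) * (m : ℝ) ^ (-(2 + α)) := by
    have h := abs_integral_rpow_neg_sub_le (p := 1 + α) (by linarith) hm0
    rwa [show 1 + α + 1 = 2 + α by ring] at h
  have hL := abs_Lam_sub_rpow_le hα hα1 hm
  have hsplit : 1 / Gamma (-α) * (h ^ (-(1 + α) + 1) * I) - Lam α m / h ^ α =
      h ^ (-α) * ((I - (m : ℝ) ^ (-(1 + α))) / Gamma (-α) -
        (Lam α m - (m : ℝ) ^ (-(1 + α)) / Gamma (-α))) := by
    rw [show -(1 + α) + 1 = -α by ring, rpow_neg hh.le]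
    field_simp
    ring
  rw [integral_rpow_sub_mul_eq _ hh _ hm0.le, hsplit, abs_mul,
    abs_of_pos (rpow_pos_of_pos hh _)]
  calc
    _ ≤ h ^ (-α) * ((1 + α) * (m : ℝ) ^ (-(2 + α)) / |Gamma (-α)| +
        α / (1 - α) / |Gamma (-α)| * (m : ℝ) ^ (-(2 + α))) := by
      gcongr
      refine (abs_sub _ _).trans (add_le_add ?_ hL)
      rw [abs_div]
      gcongr
    _ = (1 + α + α / (1 - α)) / |Gamma (-α)| / (h ^ α * (m : ℝ) ^ (2 + α)) := by
      rw [rpow_neg hh.le, rpow_neg hm0.le]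
      field_simp
end

section
/- The heat maximal function is unbounded on ℓ^2(ℤ): for f = δ₀ (f(0)=1, f(j)=0 otherwise), the function T^* f(n) = sup_{t≥0} |Σ_{j≥0} e^{-t} t^j/j! · f(n−j)| satisfies T^* f(n) = e^{-n} n^n / n! for n ≥ 0, and Σ_{n∈ℤ} (T^* f(n))^2 = ∞. -/
open Real

/-- The heat semigroup from the left: `T_{t,-} f(n) = ∑_{j≥0} e^{-t} t^j/j! · f(n−j)`. -/
noncomputable def Tm (t : ℝ) (f : ℤ → ℝ) (n : ℤ) : ℝ :=
  ∑' j : ℕ, Real.exp (-t) * t ^ j / (j.factorial : ℝ) * f (n - (j : ℤ))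

/-- The delta function at `0`. -/
noncomputable def delta0 : ℤ → ℝ := fun m => if m = 0 then 1 else 0

/-- The heat maximal function `T^* f(n) = sup_{t ≥ 0} |T_{t,-} f(n)|`. -/
noncomputable def Tstar (f : ℤ → ℝ) (n : ℤ) : ℝ := ⨆ t ∈ Set.Ici (0 : ℝ), |Tm t f n|

lemma Tm_delta0 (t : ℝ) (n : ℕ) :
    Tm t delta0 (n : ℤ) = Real.exp (-t) * t ^ n / (n.factorial : ℝ) := by
  unfold Tm
  rw [show Real.exp (-t) * t ^ n / (n.factorial : ℝ)
      = Real.exp (-t) * t ^ n / (n.factorial : ℝ) * delta0 ((n : ℤ) - (n : ℤ)) by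
    simp [delta0]]
  apply tsum_eq_single
  intro j hj
  have : (n : ℤ) - (j : ℤ) ≠ 0 := by
    intro h
    exact hj (by exact_mod_cast (sub_eq_zero.mp h).symm)
  simp [delta0, this]

lemma key_ineq (n : ℕ) {t : ℝ} (ht : 0 ≤ t) :
    Real.exp (-t) * t ^ n ≤ Real.exp (-(n : ℝ)) * (n : ℝ) ^ n := by
  rcases Nat.eq_zero_or_pos n with rfl | hn
  · simpa using Real.exp_le_exp.mpr (by linarith : -t ≤ -(0:ℝ))
  · have hn' : (0 : ℝ) < n := by exact_mod_cast hn
    have h1 : t ≤ (n : ℝ) * Real.exp (t / n - 1) := by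
      have := Real.add_one_le_exp (t / n - 1)
      have h2 : t / n ≤ Real.exp (t / n - 1) := by linarith
      calc t = (n : ℝ) * (t / n) := by field_simp
        _ ≤ (n : ℝ) * Real.exp (t / n - 1) := by nlinarith
    have h2 : t ^ n ≤ ((n : ℝ) * Real.exp (t / n - 1)) ^ n :=
      pow_le_pow_left₀ ht h1 n
    have h3 : ((n : ℝ) * Real.exp (t / n - 1)) ^ n
        = (n : ℝ) ^ n * Real.exp (t - n) := by
      rw [mul_pow, ← Real.exp_nat_mul]
      congr 2
      field_simp
    have h4 : Real.exp (-t) * Real.exp (t - n) = Real.exp (-(n : ℝ)) := by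
      rw [← Real.exp_add]; ring_nf
    calc Real.exp (-t) * t ^ n ≤ Real.exp (-t) * ((n : ℝ) ^ n * Real.exp (t - n)) := by
          rw [h3] at h2; nlinarith [Real.exp_pos (-t)]
      _ = Real.exp (-(n : ℝ)) * (n : ℝ) ^ n := by rw [← h4]; ring

lemma Tstar_delta0 (n : ℕ) :
    Tstar delta0 (n : ℤ) = Real.exp (-(n : ℝ)) * (n : ℝ) ^ n / (n.factorial : ℝ) := by
  set M := Real.exp (-(n : ℝ)) * (n : ℝ) ^ n / (n.factorial : ℝ) with hM
  have hM0 : 0 ≤ M := by positivity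
  have hbd : ∀ t : ℝ, (⨆ _ : t ∈ Set.Ici (0:ℝ), |Tm t delta0 (n : ℤ)|) ≤ M := by
    intro t
    apply Real.iSup_le _ hM0
    intro ht
    have ht' : (0:ℝ) ≤ t := ht
    rw [Tm_delta0, abs_of_nonneg (by positivity), hM]
    have hf : (0 : ℝ) < (n.factorial : ℝ) := by exact_mod_cast n.factorial_pos
    exact div_le_div_of_nonneg_right (key_ineq n ht') hf.le
  apply le_antisymm
  · exact Real.iSup_le hbd hM0
  · have hmem : (n : ℝ) ∈ Set.Ici (0 : ℝ) := by simp
    have : (⨆ _ : (n:ℝ) ∈ Set.Ici (0:ℝ), |Tm (n:ℝ) delta0 (n : ℤ)|) = M := by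
      rw [ciSup_pos hmem, Tm_delta0, abs_of_nonneg (by positivity)]
    exact le_ciSup_of_le ⟨M, by rintro _ ⟨t, rfl⟩; exact hbd t⟩ (n : ℝ) this.ge

lemma factorial_le_stirling (n : ℕ) (hn : 1 ≤ n) :
    (n.factorial : ℝ) ≤ 2 * Real.sqrt (2 * n) * ((n : ℝ) / Real.exp 1) ^ n := by
  have h1 : Stirling.stirlingSeq n ≤ Stirling.stirlingSeq 1 := by
    obtain ⟨m, rfl⟩ := Nat.exists_eq_add_of_le hn
    have := Stirling.stirlingSeq'_antitone (Nat.zero_le m)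
    simpa [Function.comp, Nat.succ_eq_add_one, add_comm] using this
  have h2 : Stirling.stirlingSeq 1 ≤ 2 := by
    rw [Stirling.stirlingSeq_one, div_le_iff₀ (by positivity)]
    have hs : (1.4 : ℝ) ≤ Real.sqrt 2 := by
      rw [show (1.4 : ℝ) = Real.sqrt (1.4 ^ 2) by rw [Real.sqrt_sq]; norm_num]
      apply Real.sqrt_le_sqrt; norm_num
    nlinarith [Real.exp_one_lt_d9]
  have hn' : (0 : ℝ) < n := by exact_mod_cast hn
  have hD : 0 < Real.sqrt (2 * (n : ℝ)) * ((n : ℝ) / Real.exp 1) ^ n := by positivity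
  have h3 := h1.trans h2
  rw [Stirling.stirlingSeq, div_le_iff₀ hD] at h3
  linarith

set_option maxHeartbeats 1000000 in
/-- The heat maximal function is unbounded on `ℓ²(ℤ)`: for `f = δ₀`,
`T^* f(n) = e^{-n} n^n / n!` for `n ≥ 0`, and `∑_n (T^* f(n))² = ∞`. -/
theorem heat_maximal_unbounded :
    (∀ n : ℕ, Tstar delta0 (n : ℤ) =
      Real.exp (-(n : ℝ)) * (n : ℝ) ^ n / (n.factorial : ℝ)) ∧
    ¬ Summable (fun n : ℤ => (Tstar delta0 n) ^ 2) := by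
  refine ⟨Tstar_delta0, fun h => ?_⟩
  have hs : Summable (fun n : ℕ => (Tstar delta0 (n : ℤ)) ^ 2) :=
    h.comp_injective (fun a b hab => by exact_mod_cast hab)
  have hs2 : Summable (fun n : ℕ => (Tstar delta0 ((n + 1 : ℕ) : ℤ)) ^ 2) :=
    (summable_nat_add_iff 1).2 hs
  have hlow : ∀ n : ℕ, (1 : ℝ) / (8 * (n + 1)) ≤ (Tstar delta0 ((n + 1 : ℕ) : ℤ)) ^ 2 := by
    intro n
    set m : ℕ := n + 1 with hm'
    have hm : 1 ≤ m := Nat.le_add_left 1 n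
    have hm0 : (0 : ℝ) < m := by exact_mod_cast hm
    rw [Tstar_delta0]
    have hEq : Real.exp (-(m : ℝ)) * (m : ℝ) ^ m = ((m : ℝ) / Real.exp 1) ^ m := by
      rw [div_pow, ← Real.exp_nat_mul, mul_one, Real.exp_neg]
      field_simp
    have hfac := factorial_le_stirling m hm
    have hfp : (0 : ℝ) < (m.factorial : ℝ) := by exact_mod_cast m.factorial_pos
    have hsq : (0 : ℝ) < Real.sqrt (2 * m) := Real.sqrt_pos.mpr (by positivity)
    have hP : (0 : ℝ) < ((m : ℝ) / Real.exp 1) ^ m := by positivity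
    have h1 : 1 / (2 * Real.sqrt (2 * m))
        ≤ Real.exp (-(m : ℝ)) * (m : ℝ) ^ m / (m.factorial : ℝ) := by
      rw [hEq, div_le_div_iff₀ (by positivity) hfp]
      nlinarith
    have h2 : (1 / (2 * Real.sqrt (2 * m))) ^ 2 = 1 / (8 * m) := by
      rw [div_pow, mul_pow, Real.sq_sqrt (by positivity : (0:ℝ) ≤ 2 * (m:ℝ))]
      norm_num; ring
    have h3 : (1 / (2 * Real.sqrt (2 * m))) ^ 2
        ≤ (Real.exp (-(m : ℝ)) * (m : ℝ) ^ m / (m.factorial : ℝ)) ^ 2 :=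
      pow_le_pow_left₀ (by positivity) h1 2
    rw [h2] at h3
    have he : (1 : ℝ) / (8 * ((n : ℝ) + 1)) = 1 / (8 * (m : ℝ)) := by
      push_cast [hm']; ring
    rw [he]
    exact h3
  have hsum : Summable (fun n : ℕ => (1 : ℝ) / (8 * (n + 1))) :=
    Summable.of_nonneg_of_le (fun n => by positivity) hlow hs2
  have hsum2 : Summable (fun n : ℕ => (1 : ℝ) / (n + 1)) := by
    have := hsum.mul_left 8
    refine this.congr fun n => ?_
    field_simp
  exact (mt (summable_nat_add_iff 1).1 Real.not_summable_one_div_natCast)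
    (by exact_mod_cast hsum2)
end

section
/- Poisson kernel decay: let 0 < γ < 1 and define P_t^γ(j) = (t^{2γ}/(4^γ Γ(γ) j!)) ∫_0^∞ e^{−s − t²/(4s)} s^{j−γ−1} ds for j ∈ ℕ and t > 0. Then there exists C_γ > 0 such that sup_{t>0} P_t^γ(j) ≤ C_γ / j for all j ≥ 1. -/
open Real MeasureTheory

/-- The Poisson kernel
`P_t^γ(j) = (t^{2γ}/(4^γ Γ(γ) j!)) ∫_0^∞ e^{−s − t²/(4s)} s^{j−γ−1} ds`. -/
noncomputable def PoissonKer (γ t : ℝ) (j : ℕ) : ℝ :=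
  t ^ (2 * γ) / (4 ^ γ * Real.Gamma γ * (j.factorial : ℝ)) *
    ∫ s in Set.Ioi (0 : ℝ), Real.exp (-s - t ^ 2 / (4 * s)) * s ^ ((j : ℝ) - γ - 1)

/-!
Since `y e^{-y} ≤ e^{-1}`, applied at `y = x/γ` and raised to the power `γ`, we get
`x^γ e^{-x} ≤ (γ/e)^γ`. At `x = t²/(4s)` this says `t^{2γ} e^{-t²/(4s)} ≤ (4γ s/e)^γ`, so
the integral defining `P_t^γ(j)`, multiplied by `t^{2γ}`, is at most `(4γ/e)^γ Γ(j)`, uniformly in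
`t`; and `Γ(j) / j! = 1/j`.
-/

lemma rpow_mul_exp_neg_le {γ x : ℝ} (hγ : 0 < γ) (hx : 0 ≤ x) :
    x ^ γ * exp (-x) ≤ (γ * exp (-1)) ^ γ := by
  have hbase : x * exp (-(x / γ)) ≤ γ * exp (-1) := by
    calc x * exp (-(x / γ)) = γ * (x / γ * exp (-(x / γ))) := by field_simp
      _ ≤ γ * exp (-1) := mul_le_mul_of_nonneg_left (mul_exp_neg_le_exp_neg_one _) hγ.le
  calc x ^ γ * exp (-x) = (x * exp (-(x / γ))) ^ γ := by
        rw [mul_rpow hx (exp_pos _).le, ← exp_mul]; field_simp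
    _ ≤ (γ * exp (-1)) ^ γ := rpow_le_rpow (by positivity) hbase hγ.le

lemma rpow_mul_exp_neg_sq_div_le {γ t s : ℝ} (hγ : 0 < γ) (ht : 0 ≤ t) (hs : 0 < s) :
    t ^ (2 * γ) * exp (-(t ^ 2 / (4 * s))) ≤ (4 * s) ^ γ * (γ * exp (-1)) ^ γ := by
  have h4s : 0 < 4 * s := by positivity
  have hsplit : t ^ (2 * γ) = (4 * s) ^ γ * (t ^ 2 / (4 * s)) ^ γ := by
    rw [← mul_rpow h4s.le (by positivity), mul_div_cancel₀ _ h4s.ne', rpow_mul ht]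
    norm_cast
  rw [hsplit, mul_assoc]
  exact mul_le_mul_of_nonneg_left (rpow_mul_exp_neg_le hγ (by positivity)) (by positivity)

lemma rpow_mul_integrand_le {γ t s : ℝ} (a : ℝ) (hγ : 0 < γ) (ht : 0 ≤ t) (hs : 0 < s) :
    t ^ (2 * γ) * (exp (-s - t ^ 2 / (4 * s)) * s ^ (a - γ - 1)) ≤
      (4 * γ * exp (-1)) ^ γ * (exp (-s) * s ^ (a - 1)) := by
  have hspow : s ^ γ * s ^ (a - γ - 1) = s ^ (a - 1) := by
    rw [← rpow_add hs]; ring_nf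
  calc t ^ (2 * γ) * (exp (-s - t ^ 2 / (4 * s)) * s ^ (a - γ - 1))
      = t ^ (2 * γ) * exp (-(t ^ 2 / (4 * s))) * (exp (-s) * s ^ (a - γ - 1)) := by
        rw [sub_eq_add_neg, exp_add]; ring
    _ ≤ (4 * s) ^ γ * (γ * exp (-1)) ^ γ * (exp (-s) * s ^ (a - γ - 1)) :=
        mul_le_mul_of_nonneg_right (rpow_mul_exp_neg_sq_div_le hγ ht hs) (by positivity)
    _ = (4 * γ * exp (-1)) ^ γ * (exp (-s) * s ^ (a - 1)) := by
        rw [← hspow, mul_rpow (by norm_num) hs.le, mul_assoc 4,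
          mul_rpow (by norm_num) (by positivity : 0 ≤ γ * exp (-1))]
        ring

lemma rpow_mul_integral_le_mul_Gamma {γ t a : ℝ} (hγ : 0 < γ) (ht : 0 ≤ t) (ha : 0 < a) :
    t ^ (2 * γ) * ∫ s in Set.Ioi (0 : ℝ), exp (-s - t ^ 2 / (4 * s)) * s ^ (a - γ - 1) ≤
      (4 * γ * exp (-1)) ^ γ * Gamma a := by
  rw [Gamma_eq_integral ha, ← integral_const_mul, ← integral_const_mul]
  refine integral_mono_of_nonneg ?_ ((GammaIntegral_convergent ha).const_mul _) ?_
  · filter_upwards [ae_restrict_mem measurableSet_Ioi] with s (hs : 0 < s)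
    positivity
  · filter_upwards [ae_restrict_mem measurableSet_Ioi] with s (hs : 0 < s)
    exact rpow_mul_integrand_le a hγ ht hs

lemma Gamma_natCast_div_factorial {j : ℕ} (hj : j ≠ 0) :
    Gamma j / j.factorial = (j : ℝ)⁻¹ := by
  have hj' : (j : ℝ) ≠ 0 := Nat.cast_ne_zero.mpr hj
  rw [← Gamma_nat_eq_factorial, Gamma_add_one hj',
    div_mul_cancel_right₀ (Gamma_pos_of_pos (by positivity)).ne']

lemma poissonKer_le {γ t : ℝ} (hγ : 0 < γ) (ht : 0 ≤ t) {j : ℕ} (hj : j ≠ 0) :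
    PoissonKer γ t j ≤ (γ * exp (-1)) ^ γ / Gamma γ / j := by
  have hj' : (0 : ℝ) < j := by positivity
  calc PoissonKer γ t j
      ≤ (4 * γ * exp (-1)) ^ γ * Gamma j / (4 ^ γ * Gamma γ * j.factorial) := by
        rw [PoissonKer, div_mul_eq_mul_div]
        exact div_le_div_of_nonneg_right (rpow_mul_integral_le_mul_Gamma hγ ht hj')
          (by positivity)
    _ = 4 ^ γ / 4 ^ γ * ((γ * exp (-1)) ^ γ / Gamma γ) * (Gamma j / j.factorial) := by
        rw [mul_assoc 4, mul_rpow (by norm_num) (by positivity)]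
        ring
    _ = (γ * exp (-1)) ^ γ / Gamma γ / j := by
        rw [div_self (by positivity), Gamma_natCast_div_factorial hj]
        ring

theorem poisson_kernel_decay_general (γ : ℝ) (hγ : 0 < γ) :
    ∃ C : ℝ, 0 < C ∧ ∀ j : ℕ, 1 ≤ j → ∀ t : ℝ, 0 < t →
      PoissonKer γ t j ≤ C / (j : ℝ) :=
  ⟨(γ * exp (-1)) ^ γ / Gamma γ, by have := Gamma_pos_of_pos hγ; positivity,
    fun _ hj _ ht => poissonKer_le hγ ht.le (by omega)⟩

/-- Poisson kernel decay: `sup_{t>0} P_t^γ(j) ≤ C_γ / j` for `j ≥ 1`. -/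
theorem poisson_kernel_decay (γ : ℝ) (hγ : 0 < γ) (hγ1 : γ < 1) :
    ∃ C : ℝ, 0 < C ∧ ∀ j : ℕ, 1 ≤ j → ∀ t : ℝ, 0 < t →
      PoissonKer γ t j ≤ C / (j : ℝ) :=
  poisson_kernel_decay_general γ hγ
end
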